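/- Composition with a channel is a contraction for the dual diamond norm: if χ: B(K) → B(K') is a channel and ψ: B(H) → B(K) is Hermitian-preserving, then ‖χ ∘ ψ‖^⋄ ≤ ‖ψ‖^⋄, and similarly ‖ψ ∘ ξ‖^⋄ ≤ ‖ψ‖^⋄ for any channel ξ: B(H') → B(H). -/

import Mathlib

open scoped Matrix Kronecker ComplexOrder Matrix.Norms.L2Operator

noncomputable section

/-- Square complex matrices indexed by `ι`. -/
abbrev Mat (ι : Type) [Fintype ι] [DecidableEq ι] : Type := Matrix ι ι ℂ

/-- Linear maps between matrix algebras. -/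
abbrev MatMap (ι κ : Type) [Fintype ι] [DecidableEq ι] [Fintype κ] [DecidableEq κ] : Type :=
  Mat ι →ₗ[ℂ] Mat κ

variable {ι κ μ ν : Type} [Fintype ι] [DecidableEq ι] [Fintype κ] [DecidableEq κ]
  [Fintype μ] [DecidableEq μ] [Fintype ν] [DecidableEq ν]

/-- `φ ⊗ id_τ`, the amplification of `φ` with the identity on `Mat τ`. -/
def tensorId (φ : MatMap ι κ) (τ : Type) [Fintype τ] [DecidableEq τ] :
    Matrix (ι × τ) (ι × τ) ℂ →ₗ[ℂ] Matrix (κ × τ) (κ × τ) ℂ where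
  toFun X := Matrix.of fun p q => φ (Matrix.of fun i j => X (i, p.2) (j, q.2)) p.1 q.1
  map_add' X Y := by
    funext p q
    show φ (Matrix.of fun i j => (X + Y) (i, p.2) (j, q.2)) p.1 q.1 = _
    rw [show (Matrix.of fun i j => (X + Y) (i, p.2) (j, q.2))
        = (Matrix.of fun i j => X (i, p.2) (j, q.2))
          + (Matrix.of fun i j => Y (i, p.2) (j, q.2)) from rfl, map_add]
    rfl
  map_smul' c X := by
    funext p q
    show φ (Matrix.of fun i j => (c • X) (i, p.2) (j, q.2)) p.1 q.1 = _
    rw [show (Matrix.of fun i j => (c • X) (i, p.2) (j, q.2))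
        = c • (Matrix.of fun i j => X (i, p.2) (j, q.2)) from rfl, map_smul]
    rfl

/-- `φ` is Hermitian-preserving. -/
def IsHermitianPreserving (φ : MatMap ι κ) : Prop := ∀ X, (φ X)ᴴ = φ Xᴴ

/-- `φ` is completely positive: all amplifications by finite-dimensional identities
preserve positive semidefiniteness. -/
def IsCP (φ : MatMap ι κ) : Prop :=
  ∀ (l : ℕ) (X : Matrix (ι × Fin l) (ι × Fin l) ℂ), X.PosSemidef →
    (tensorId φ (Fin l) X).PosSemidef

/-- `φ` is trace-preserving. -/
def IsTP (φ : MatMap ι κ) : Prop := ∀ X, (φ X).trace = X.trace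

/-- A channel is a completely positive trace-preserving map. -/
def IsChannel (φ : MatMap ι κ) : Prop := IsCP φ ∧ IsTP φ

/-- Density operator. -/
def IsState (σ : Mat ι) : Prop := σ.PosSemidef ∧ σ.trace = 1

/-- The Choi matrix of `φ`. -/
def choiMatrix (φ : MatMap ι κ) : Matrix (κ × ι) (κ × ι) ℂ :=
  Matrix.of fun p q => φ (Matrix.single p.2 q.2 1) p.1 q.1

/-- The tracelike functional `s`. -/
def sFun (φ : MatMap ι ι) : ℂ :=
  ∑ i, ∑ j, φ (Matrix.single i j 1) i j

/-- The pairing `⟨ψ, φ⟩ = s(ψ ∘ φ)`. -/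
def pairing (ψ : MatMap κ ι) (φ : MatMap ι κ) : ℂ := sFun (ψ ∘ₗ φ)

/-- The erasure map `A ↦ Tr[A] σ`. -/
def erasure (σ : Mat κ) : MatMap ι κ :=
  (Matrix.traceLinearMap ι ℂ ℂ).smulRight σ

/-- The diamond norm, via its order-theoretic characterization. -/
noncomputable def diamondNorm (φ : MatMap ι κ) : ℝ :=
  sInf {r : ℝ | 0 < r ∧ ∃ α : MatMap ι κ, IsChannel α ∧
    IsCP ((r : ℂ) • α - φ) ∧ IsCP ((r : ℂ) • α + φ)}

/-- The dual diamond norm, via its order-theoretic characterization. -/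
noncomputable def dualDiamondNorm (ψ : MatMap ι κ) : ℝ :=
  sInf {r : ℝ | 0 < r ∧ ∃ σ : Mat κ, IsState σ ∧
    IsCP ((r : ℂ) • erasure (ι := ι) σ - ψ) ∧ IsCP ((r : ℂ) • erasure (ι := ι) σ + ψ)}

/-- The Hilbert–Schmidt (trace-duality) adjoint of `ψ`. -/
def adjointMap (ψ : MatMap ι κ) : MatMap κ ι where
  toFun A := Matrix.of fun i j => (A * ψ (Matrix.single j i 1)).trace
  map_add' A B := by funext i j; simp [Matrix.add_mul]
  map_smul' c A := by funext i j; simp [Matrix.smul_mul]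

/-- The cq-map associated with a family of operators. -/
def cqMap {n : ℕ} (A : Fin n → Mat ι) : MatMap (Fin n) ι where
  toFun X := ∑ i, X i i • A i
  map_add' X Y := by simp [Matrix.add_apply, add_smul, Finset.sum_add_distrib]
  map_smul' c X := by simp [Matrix.smul_apply, smul_smul, Finset.smul_sum]

/-- The qc-map associated with a family of operators. -/
def qcMap {n : ℕ} (B : Fin n → Mat ι) : MatMap ι (Fin n) where
  toFun X := Matrix.diagonal fun i => (X * B i).trace
  map_add' X Y := by
    funext i j
    by_cases h : i = j <;>
      simp [Matrix.add_mul, Matrix.diagonal, Matrix.of_apply, h]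
  map_smul' c X := by
    funext i j
    by_cases h : i = j <;>
      simp [Matrix.smul_mul, Matrix.diagonal, Matrix.of_apply, h]

/-- A POVM with `n` outcomes. -/
def IsPOVM {n : ℕ} (M : Fin n → Mat ι) : Prop :=
  (∀ i, (M i).PosSemidef) ∧ ∑ i, M i = 1

/-- An ensemble: probabilities with states. -/
def IsEnsemble {n : ℕ} (lam : Fin n → ℝ) (σ : Fin n → Mat ι) : Prop :=
  (∀ i, 0 < lam i) ∧ (∑ i, lam i = 1) ∧ ∀ i, IsState (σ i)

/-- Optimal success probability of guessing among the states of an ensemble. -/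
noncomputable def pSucc {n : ℕ} (lam : Fin n → ℝ) (σ : Fin n → Mat ι) : ℝ :=
  sSup {r : ℝ | ∃ M : Fin n → Mat ι, IsPOVM M ∧
    r = ∑ i, lam i * ((M i * σ i).trace).re}

/-- Trace norm `‖A‖₁ = Tr √(AᴴA)`. -/
noncomputable def traceNorm (A : Mat ι) : ℝ :=
  ((Matrix.posSemidef_conjTranspose_mul_self A).isHermitian.eigenvectorUnitary.1 *
    Matrix.diagonal ((fun x : ℝ => (x : ℂ)) ∘ (√·) ∘ (Matrix.posSemidef_conjTranspose_mul_self A).isHermitian.eigenvalues) *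
    (star (Matrix.posSemidef_conjTranspose_mul_self A).isHermitian.eigenvectorUnitary : Matrix ι ι ℂ)).trace.re

/-- Le Cam deficiency of `Φ` with respect to `Ψ`. -/
noncomputable def deficiency (Φ : MatMap ι κ) (Ψ : MatMap ι μ) : ℝ :=
  sInf {r : ℝ | ∃ α : MatMap μ κ, IsChannel α ∧ r = diamondNorm (Φ - α ∘ₗ Ψ)}


/-! If `r` and the state `σ` witness `-r·φ_σ ≤ ψ ≤ r·φ_σ` in the completely positive order, then
`r` and `χ σ` witness the same for `χ ∘ ψ`, because `χ ∘ φ_σ = φ_{χ σ}` and composing with a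
completely positive map preserves the order; and `r`, `σ` witness it for `ψ ∘ ξ`, because
`φ_σ ∘ ξ = φ_σ` for trace-preserving `ξ`. So the infimum defining `‖·‖^⋄` can only decrease,
provided `ψ` has some witness at all. For Hermitian-preserving `ψ` its Choi matrix `C` is
Hermitian, and the maximally mixed state with `r = dim K · (‖C‖ + 1)` is a witness, since a map
whose Choi matrix is positive semidefinite is completely positive. -/

namespace IsCP

theorem comp {φ : MatMap ι κ} {χ : MatMap κ μ} (hχ : IsCP χ) (hφ : IsCP φ) :
    IsCP (χ ∘ₗ φ) :=
  fun l X hX => hχ l _ (hφ l X hX)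

theorem posSemidef_apply {φ : MatMap ι κ} (hφ : IsCP φ) {σ : Mat ι} (hσ : σ.PosSemidef) :
    (φ σ).PosSemidef :=
  (hφ 1 _ (hσ.submatrix Prod.fst)).submatrix fun j => (j, 0)

end IsCP

theorem IsChannel.isState_apply {φ : MatMap ι κ} (hφ : IsChannel φ) {σ : Mat ι}
    (hσ : IsState σ) : IsState (φ σ) :=
  ⟨hφ.1.posSemidef_apply hσ.1, (hφ.2 σ).trans hσ.2⟩

theorem comp_erasure (χ : MatMap κ μ) (σ : Mat κ) :
    χ ∘ₗ erasure (ι := ι) σ = erasure (χ σ) :=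
  LinearMap.ext fun A => map_smul χ A.trace σ

theorem erasure_smul (c : ℂ) (σ : Mat κ) : erasure (ι := ι) (c • σ) = c • erasure σ :=
  LinearMap.ext fun A => smul_comm A.trace c σ

theorem erasure_comp_of_isTP {ξ : MatMap μ ι} (hξ : IsTP ξ) (σ : Mat κ) :
    erasure (ι := ι) σ ∘ₗ ξ = erasure σ :=
  LinearMap.ext fun A => congrArg (· • σ) (hξ A)

theorem choiMatrix_add (φ ψ : MatMap ι κ) : choiMatrix (φ + ψ) = choiMatrix φ + choiMatrix ψ :=
  rfl

theorem choiMatrix_sub (φ ψ : MatMap ι κ) : choiMatrix (φ - ψ) = choiMatrix φ - choiMatrix ψ :=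
  rfl

theorem choiMatrix_smul (c : ℂ) (φ : MatMap ι κ) : choiMatrix (c • φ) = c • choiMatrix φ :=
  rfl

theorem choiMatrix_erasure (σ : Mat κ) : choiMatrix (erasure (ι := ι) σ) = σ ⊗ₖ 1 := by
  ext ⟨j, i⟩ ⟨j', i'⟩
  by_cases h : i = i'
  · subst h
    simp [choiMatrix, erasure, Matrix.trace_single_eq_same]
  · simp [choiMatrix, erasure, Matrix.trace_single_eq_of_ne _ _ _ h, h]

theorem IsHermitianPreserving.isHermitian_choiMatrix {ψ : MatMap ι κ}
    (hψ : IsHermitianPreserving ψ) : (choiMatrix ψ).IsHermitian := by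
  ext p q
  rw [Matrix.conjTranspose_apply]
  simp only [choiMatrix, Matrix.of_apply]
  rw [← Matrix.conjTranspose_apply, hψ, Matrix.conjTranspose_single, star_one]

theorem map_apply_eq_sum_choiMatrix (φ : MatMap ι κ) (Y : Mat ι) (j j' : κ) :
    φ Y j j' = ∑ i, ∑ i', Y i i' * choiMatrix φ (j, i) (j', i') := by
  conv_lhs => rw [Y.matrix_eq_sum_single]
  simp only [map_sum, Matrix.sum_apply, choiMatrix, Matrix.of_apply]
  refine Finset.sum_congr rfl fun i _ => Finset.sum_congr rfl fun i' _ => ?_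
  rw [← smul_eq_mul, ← Matrix.smul_apply, ← map_smul, Matrix.smul_single, smul_eq_mul, mul_one]

/-- `(φ ⊗ id)(X)` is the compression of `C(φ) ⊗ X` that contracts its two middle `ι`-indices. -/
theorem exists_tensorId_eq_compression_choiMatrix_kronecker (φ : MatMap ι κ) (τ : Type)
    [Fintype τ] [DecidableEq τ] (X : Matrix (ι × τ) (ι × τ) ℂ) :
    ∃ V : Matrix (κ × τ) ((κ × ι) × (ι × τ)) ℂ, tensorId φ τ X = V * (choiMatrix φ ⊗ₖ X) * Vᴴ := by
  refine ⟨Matrix.of fun p q => if q.1.1 = p.1 ∧ q.1.2 = q.2.1 ∧ q.2.2 = p.2 then 1 else 0, ?_⟩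
  ext p q
  change φ (Matrix.of fun i i' => X (i, p.2) (i', q.2)) p.1 q.1 = _
  rw [map_apply_eq_sum_choiMatrix]
  simp only [Matrix.of_apply, ite_and, Matrix.mul_apply, Matrix.kroneckerMap_apply, ite_mul,
    one_mul, zero_mul, Fintype.sum_prod_type, Finset.sum_ite_irrel, Finset.sum_ite_eq',
    Finset.mem_univ, ↓reduceIte, Finset.sum_const_zero, Finset.sum_ite_eq,
    Matrix.conjTranspose_apply, RCLike.star_def, apply_ite (starRingEnd ℂ), map_one, map_zero,
    mul_ite, mul_one, mul_zero]
  rw [Finset.sum_comm]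
  exact Finset.sum_congr rfl fun _ _ => Finset.sum_congr rfl fun _ _ => mul_comm _ _

theorem isCP_of_posSemidef_choiMatrix {φ : MatMap ι κ} (h : (choiMatrix φ).PosSemidef) :
    IsCP φ := fun l X hX => by
  obtain ⟨V, hV⟩ := exists_tensorId_eq_compression_choiMatrix_kronecker φ (Fin l) X
  exact hV ▸ (h.kronecker hX).mul_mul_conjTranspose_same V

theorem isCP_erasure {σ : Mat κ} (hσ : σ.PosSemidef) : IsCP (erasure (ι := ι) σ) :=
  isCP_of_posSemidef_choiMatrix <| by
    rw [choiMatrix_erasure]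
    exact hσ.kronecker .one

open scoped MatrixOrder in
theorem Matrix.IsHermitian.posSemidef_smul_one_add {n : Type} [Fintype n] [DecidableEq n]
    {C : Matrix n n ℂ} (hC : C.IsHermitian) {t : ℝ} (ht : ‖C‖ ≤ t) :
    ((t : ℂ) • (1 : Matrix n n ℂ) + C).PosSemidef := by
  rw [← Matrix.nonneg_iff_posSemidef]
  have hle : -algebraMap ℝ (Matrix n n ℂ) t ≤ C :=
    (neg_le_neg (algebraMap_mono _ ht)).trans hC.isSelfAdjoint.neg_algebraMap_norm_le_self
  rwa [neg_le_iff_add_nonneg', Algebra.algebraMap_eq_smul_one, ← Complex.coe_smul] at hle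

theorem Matrix.IsHermitian.posSemidef_smul_one_sub {n : Type} [Fintype n] [DecidableEq n]
    {C : Matrix n n ℂ} (hC : C.IsHermitian) {t : ℝ} (ht : ‖C‖ ≤ t) :
    ((t : ℂ) • (1 : Matrix n n ℂ) - C).PosSemidef :=
  sub_eq_add_neg _ C ▸ hC.neg.posSemidef_smul_one_add ((norm_neg C).trans_le ht)

variable (κ) in
def maximallyMixed : Mat κ := ((Fintype.card κ : ℂ)⁻¹) • 1

theorem isState_maximallyMixed [Nonempty κ] : IsState (maximallyMixed κ) := by
  have hcard : (Fintype.card κ : ℂ) ≠ 0 := Nat.cast_ne_zero.mpr Fintype.card_ne_zero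
  refine ⟨?_, by simp [maximallyMixed, Matrix.trace_smul, hcard]⟩
  simpa [maximallyMixed] using
    Matrix.PosSemidef.one.smul (inv_nonneg.mpr (Nat.cast_nonneg (α := ℂ) (Fintype.card κ)))

theorem not_isState_of_isEmpty [IsEmpty κ] (σ : Mat κ) : ¬IsState σ := fun hσ => by
  simpa [Matrix.trace] using hσ.2

def IsDualDiamondBound (ψ : MatMap ι κ) (r : ℝ) : Prop :=
  0 < r ∧ ∃ σ : Mat κ, IsState σ ∧
    IsCP ((r : ℂ) • erasure (ι := ι) σ - ψ) ∧ IsCP ((r : ℂ) • erasure (ι := ι) σ + ψ)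

theorem dualDiamondNorm_eq_sInf (ψ : MatMap ι κ) :
    dualDiamondNorm ψ = sInf {r | IsDualDiamondBound ψ r} :=
  rfl

namespace IsDualDiamondBound

theorem channel_comp {ψ : MatMap ι κ} {χ : MatMap κ μ} (hχ : IsChannel χ) {r : ℝ}
    (h : IsDualDiamondBound ψ r) : IsDualDiamondBound (χ ∘ₗ ψ) r := by
  obtain ⟨hr, σ, hσ, hsub, hadd⟩ := h
  refine ⟨hr, χ σ, hχ.isState_apply hσ, ?_, ?_⟩
  · simpa [LinearMap.comp_sub, LinearMap.comp_smul, comp_erasure] using hχ.1.comp hsub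
  · simpa [LinearMap.comp_add, LinearMap.comp_smul, comp_erasure] using hχ.1.comp hadd

theorem comp_channel {ψ : MatMap ι κ} {ξ : MatMap μ ι} (hξ : IsChannel ξ) {r : ℝ}
    (h : IsDualDiamondBound ψ r) : IsDualDiamondBound (ψ ∘ₗ ξ) r := by
  obtain ⟨hr, σ, hσ, hsub, hadd⟩ := h
  refine ⟨hr, σ, hσ, ?_, ?_⟩
  · simpa [LinearMap.sub_comp, LinearMap.smul_comp, erasure_comp_of_isTP hξ.2] using
      hsub.comp hξ.1
  · simpa [LinearMap.add_comp, LinearMap.smul_comp, erasure_comp_of_isTP hξ.2] using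
      hadd.comp hξ.1

end IsDualDiamondBound

theorem exists_isDualDiamondBound [Nonempty κ] {ψ : MatMap ι κ} (hψ : IsHermitianPreserving ψ) :
    ∃ r, IsDualDiamondBound ψ r := by
  set t : ℝ := ‖choiMatrix ψ‖ + 1
  have ht : ‖choiMatrix ψ‖ ≤ t := le_add_of_nonneg_right zero_le_one
  have hchoi : choiMatrix (((Fintype.card κ * t : ℝ) : ℂ) • erasure (ι := ι) (maximallyMixed κ))
      = (t : ℂ) • 1 := by
    rw [choiMatrix_smul, choiMatrix_erasure, maximallyMixed, Matrix.smul_kronecker,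
      Matrix.one_kronecker_one, smul_smul]
    congr 1
    push_cast
    field_simp
  refine ⟨Fintype.card κ * t, by positivity, maximallyMixed κ, isState_maximallyMixed,
    isCP_of_posSemidef_choiMatrix ?_, isCP_of_posSemidef_choiMatrix ?_⟩
  · rw [choiMatrix_sub, hchoi]
    exact hψ.isHermitian_choiMatrix.posSemidef_smul_one_sub ht
  · rw [choiMatrix_add, hchoi]
    exact hψ.isHermitian_choiMatrix.posSemidef_smul_one_add ht

/-- Nonemptiness of the bounds of `ψ` is needed: `sInf ∅ = 0` in `ℝ`. -/
theorem dualDiamondNorm_le_of_isDualDiamondBound_imp {ψ : MatMap ι κ} {φ : MatMap μ ν}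
    (hψ : ∃ r, IsDualDiamondBound ψ r) (h : ∀ r, IsDualDiamondBound ψ r → IsDualDiamondBound φ r) :
    dualDiamondNorm φ ≤ dualDiamondNorm ψ :=
  csInf_le_csInf ⟨0, fun _ hr => hr.1.le⟩ hψ h

theorem dualDiamondNorm_zero : dualDiamondNorm (0 : MatMap ι κ) = 0 := by
  rcases isEmpty_or_nonempty κ with hκ | hκ
  · simp [dualDiamondNorm_eq_sInf, IsDualDiamondBound, not_isState_of_isEmpty]
  · suffices {r | IsDualDiamondBound (0 : MatMap ι κ) r} = Set.Ioi 0 by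
      rw [dualDiamondNorm_eq_sInf, this, csInf_Ioi]
    ext r
    refine ⟨fun h => h.1, fun hr => ⟨hr, maximallyMixed κ, isState_maximallyMixed, ?_⟩⟩
    have hcp : IsCP ((r : ℂ) • erasure (ι := ι) (maximallyMixed κ)) := by
      rw [← erasure_smul]
      exact isCP_erasure (isState_maximallyMixed.1.smul (Complex.zero_le_real.mpr hr.le))
    exact ⟨by rwa [sub_zero], by rwa [add_zero]⟩

theorem dualDiamondNorm_comp_channel {h h' k k' : ℕ}
    (ψ : MatMap (Fin h) (Fin k)) (hψ : IsHermitianPreserving ψ)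
    (χ : MatMap (Fin k) (Fin k')) (hχ : IsChannel χ)
    (ξ : MatMap (Fin h') (Fin h)) (hξ : IsChannel ξ) :
    dualDiamondNorm (χ ∘ₗ ψ) ≤ dualDiamondNorm ψ
      ∧ dualDiamondNorm (ψ ∘ₗ ξ) ≤ dualDiamondNorm ψ := by
  rcases isEmpty_or_nonempty (Fin k) with hk | hk
  · obtain rfl : ψ = 0 := Subsingleton.elim ψ 0
    simp [dualDiamondNorm_zero]
  · have hbound := exists_isDualDiamondBound hψ
    exact ⟨dualDiamondNorm_le_of_isDualDiamondBound_imp hbound fun _ => .channel_comp hχ,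
      dualDiamondNorm_le_of_isDualDiamondBound_imp hbound fun _ => .comp_channel hξ⟩
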